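/- arXiv:math/0105244 — 2 statements merged into one kernel-verified Lean document; each statement's English description precedes it below -/
import Mathlib

section
/- Unique solvability of twisted linear difference equations in complete rings: let R be a commutative ring and I an ideal of R such that R is I-adically complete and I-adically separated, and let τ : R → R be a ring endomorphism with τ(I) ⊆ I. Then for every a ∈ I, every unit u ∈ R^×, and every c ∈ R, there exists a unique d ∈ R satisfying a·τ(d) − u·d = c. -/
/-- Unique solvability of twisted linear difference equations in
complete rings.  Let `R` be a commutative ring and `I` an ideal such that `R` is
`I`-adically complete and separated, and let `τ : R → R` be a ring endomorphism with
`τ(I) ⊆ I`.  Then for every `a ∈ I`, every unit `u ∈ Rˣ` and every `c ∈ R` there is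
a unique `d ∈ R` with `a·τ(d) − u·d = c`. -/
theorem existsUnique_solution_twisted_difference_equation
    (R : Type) [CommRing R] (I : Ideal R) (hcomplete : IsAdicComplete I R)
    (τ : R →+* R) (hτ : ∀ x ∈ I, τ x ∈ I)
    (a : R) (ha : a ∈ I) (u : Rˣ) (c : R) :
    ∃! d : R, a * τ d - (u : R) * d = c := by
  -- τ preserves powers of I
  have hτpow : ∀ n : ℕ, ∀ x ∈ I ^ n, τ x ∈ I ^ n := by
    intro n x hx
    have h1 : Ideal.map τ I ≤ I := Ideal.map_le_iff_le_comap.mpr (fun y hy => hτ y hy)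
    have h2 : τ x ∈ Ideal.map τ (I ^ n) := Ideal.mem_map_of_mem τ hx
    rw [Ideal.map_pow] at h2
    exact Ideal.pow_right_mono h1 n h2
  have hsm : ∀ n : ℕ, (I ^ n • ⊤ : Submodule R R) = I ^ n := by
    intro n; rw [smul_eq_mul, Ideal.mul_top]
  -- the approximating map
  set F : R → R := fun d => (↑u⁻¹ : R) * (a * τ d - c) with hF
  have hfix : ∀ d : R, (a * τ d - (u : R) * d = c) ↔ F d = d := by
    intro d
    constructor <;> intro h
    · simp only [hF]
      linear_combination (↑u⁻¹ : R) * h + d * u.inv_mul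
    · simp only [hF] at h
      linear_combination (↑u : R) * h - (a * τ d - c) * u.mul_inv
  -- contraction property
  have hcontr : ∀ (n : ℕ) (x y : R), x - y ∈ I ^ n → F x - F y ∈ I ^ (n + 1) := by
    intro n x y hxy
    have h1 : τ (x - y) ∈ I ^ n := hτpow n _ hxy
    have h2 : a * τ (x - y) ∈ I ^ (n + 1) := by
      rw [pow_succ']
      exact Ideal.mul_mem_mul ha h1
    have h3 : F x - F y = (↑u⁻¹ : R) * (a * τ (x - y)) := by
      simp only [hF, map_sub]; ring
    rw [h3]
    exact Ideal.mul_mem_left _ _ h2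
  -- the iteration sequence
  set d : ℕ → R := fun n => F^[n] 0 with hd
  have hstep : ∀ n, d (n + 1) = F (d n) := by
    intro n; simp [hd, Function.iterate_succ_apply']
  have hdiff : ∀ n, d (n + 1) - d n ∈ I ^ n := by
    intro n
    induction n with
    | zero => simp
    | succ k ih =>
      have := hcontr k (d (k + 1)) (d k) ih
      rwa [← hstep (k + 1), ← hstep k] at this
  have hcauchy : ∀ m n, m ≤ n → d n - d m ∈ I ^ m := by
    intro m n hmn
    induction n with
    | zero => simp [Nat.le_zero.mp hmn]
    | succ k ih =>
      rcases Nat.lt_or_ge m (k + 1) with h | h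
      · have hmk : m ≤ k := Nat.lt_succ_iff.mp h
        have h1 : d (k + 1) - d k ∈ I ^ m :=
          Ideal.pow_le_pow_right hmk (hdiff k)
        have h2 : d k - d m ∈ I ^ m := ih hmk
        have : d (k + 1) - d m = (d (k + 1) - d k) + (d k - d m) := by ring
        rw [this]; exact add_mem h1 h2
      · have : m = k + 1 := le_antisymm hmn h
        subst this; simp
  -- get the limit
  obtain ⟨L, hL⟩ := IsPrecomplete.prec hcomplete.toIsPrecomplete (f := d) (by
    intro m n hmn
    rw [SModEq.sub_mem, hsm]
    rw [← neg_sub]; exact neg_mem (hcauchy m n hmn))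
  have hLn : ∀ n, L - d n ∈ I ^ n := by
    intro n
    have := hL n
    rw [SModEq.sub_mem, hsm] at this
    rw [← neg_sub]; exact neg_mem this
  -- L is a fixed point
  have hfixL : F L = L := by
    have hzero : ∀ n, L - F L ∈ I ^ n := by
      intro n
      have h1 : L - d (n + 1) ∈ I ^ n :=
        Ideal.pow_le_pow_right (Nat.le_succ n) (hLn (n + 1))
      have h2 : F (d n) - F L ∈ I ^ (n + 1) := by
        refine hcontr n _ _ ?_
        rw [← neg_sub]; exact neg_mem (hLn n)
      have h2' : F (d n) - F L ∈ I ^ n := Ideal.pow_le_pow_right (Nat.le_succ n) h2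
      have : L - F L = (L - d (n + 1)) + (F (d n) - F L) := by
        rw [hstep n]; ring
      rw [this]; exact add_mem h1 h2'
    have := IsHausdorff.haus hcomplete.toIsHausdorff (L - F L) (by
      intro n
      rw [SModEq.zero, hsm]
      exact hzero n)
    exact (sub_eq_zero.mp this).symm
  refine ⟨L, (hfix L).mpr hfixL, ?_⟩
  intro y hy
  have hyfix : F y = y := (hfix y).mp hy
  have hdiffn : ∀ n, y - L ∈ I ^ n := by
    intro n
    induction n with
    | zero => simp
    | succ k ih =>
      have := hcontr k y L ih
      rwa [hyfix, hfixL] at this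
  have := IsHausdorff.haus hcomplete.toIsHausdorff (y - L) (by
    intro n
    rw [SModEq.zero, hsm]
    exact hdiffn n)
  exact sub_eq_zero.mp this
end

section
/- Nonexistence of Frobenius eigenvectors in Γ with non-unit eigenvalue: if x ∈ Γ is nonzero and λ ∈ O = W(k) satisfies σ(x) = λ·x, then λ is a unit in O (i.e., v_p(λ) = 0). Equivalently, for λ ∈ O with v_p(λ) > 0, the equation σ(x) = λ·x has no nonzero solution in Γ. -/
open scoped TensorProduct
open Pointwise

/-- An `F`-crystal over `R` with respect to a Frobenius lift `σR`. -/
structure IsFCrystal (p : ℕ) (R : Type) [CommRing R] (σR : R →+* R)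
    (M : Type) [AddCommGroup M] [Module R M] (F : M →+ M) : Prop where
  free : Module.Free R M
  finite : Module.Finite R M
  injective : Function.Injective F
  semilinear : ∀ (x : R) (m : M), F (x • m) = σR x • F m
  isogeny : ∃ a : ℕ, ∀ m : M, (p : R) ^ a • m ∈ Submodule.span R (Set.range ⇑F)

/-- `(M, F)` is isoclinic of slope `s = a/b`. -/
def IsIsoclinic (p : ℕ) (R : Type) [CommRing R] {M : Type} [AddCommGroup M] [Module R M]
    (F : M →+ M) (s : ℚ) : Prop :=
  ∃ (a : ℤ) (b : ℕ), 0 < b ∧ s = (a : ℚ) / (b : ℚ) ∧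
    ∃ N : Submodule R M, Module.Finite R N ∧ Module.Free R N ∧
      (∃ c : ℕ, ∀ m : M, (p : R) ^ c • m ∈ N) ∧
      ∃ (a₁ a₂ : ℕ), (a₂ : ℤ) - (a₁ : ℤ) = a ∧
        (p : R) ^ a₁ • Submodule.span R ((⇑F)^[b] '' (N : Set M)) = (p : R) ^ a₂ • N

/-- The subquotient `B/A` (with Frobenius induced by `F`) is isoclinic of slope `s`. -/
def IsIsoclinicSubquotient (p : ℕ) (R : Type) [CommRing R] {M : Type} [AddCommGroup M]
    [Module R M] (F : M →+ M) (A B : Submodule R M) (s : ℚ) : Prop :=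
  ∃ (a : ℤ) (b : ℕ), 0 < b ∧ s = (a : ℚ) / (b : ℚ) ∧
    ∃ N : Submodule R M, A ≤ N ∧ N ≤ B ∧
      (∃ c : ℕ, ∀ m ∈ B, (p : R) ^ c • m ∈ N) ∧
      ∃ (a₁ a₂ : ℕ), (a₂ : ℤ) - (a₁ : ℤ) = a ∧
        ((p : R) ^ a₁ • Submodule.span R ((⇑F)^[b] '' (N : Set M))) ⊔ A
          = ((p : R) ^ a₂ • N) ⊔ A

/-- Ascending slope filtration: `F`-stable submodules with torsion-free quotients,
nonzero isoclinic graded pieces, and strictly increasing slopes. -/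
def IsAscendingSlopeFiltration (p : ℕ) (R : Type) [CommRing R] {M : Type} [AddCommGroup M]
    [Module R M] (F : M →+ M) (n : ℕ) (ℓ : Fin n → ℚ)
    (Mf : Fin (n + 1) → Submodule R M) : Prop :=
  Mf 0 = ⊥ ∧ Mf (Fin.last n) = ⊤ ∧ Monotone Mf ∧
  (∀ i, ∀ m ∈ Mf i, F m ∈ Mf i) ∧
  (∀ i, ∀ x : R, x ≠ 0 → ∀ m : M, x • m ∈ Mf i → m ∈ Mf i) ∧
  (∀ i : Fin n, Mf i.castSucc < Mf i.succ) ∧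
  (∀ i : Fin n, IsIsoclinicSubquotient p R F (Mf i.castSucc) (Mf i.succ) (ℓ i)) ∧
  StrictMono ℓ

/-- The coefficientwise Frobenius/`t ↦ t^p` substitution endomorphism of `Ω = W(k)[[t]]`. -/
noncomputable def sigmaOmegaFun (p : ℕ) [Fact p.Prime] (k : Type) [CommRing k]
    (f : PowerSeries (WittVector p k)) : PowerSeries (WittVector p k) :=
  PowerSeries.mk fun m =>
    if p ∣ m then WittVector.frobenius ((PowerSeries.coeff (m / p)) f) else 0

/-- `Γ` (together with the embedding `ιΩ` of `Ω = W(k)[[t]]` and the residue map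
`ρ` onto `k((t))`) is the `p`-adic completion of `Ω[t⁻¹]`: a `p`-adically complete
and separated domain in which `t` is invertible, with residue field `k((t))`
(compatibly with reduction of coefficients on `Ω`), and in which `Ω[t⁻¹]` is dense. -/
def IsGamma (p : ℕ) [Fact p.Prime] (k : Type) [Field k] (Γ : Type) [CommRing Γ]
    (ιΩ : PowerSeries (WittVector p k) →+* Γ) (ρ : Γ →+* LaurentSeries k) : Prop :=
  IsDomain Γ ∧
  Function.Injective ιΩ ∧
  IsUnit (ιΩ PowerSeries.X) ∧
  IsAdicComplete (Ideal.span {(p : Γ)}) Γ ∧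
  Function.Surjective ρ ∧
  RingHom.ker ρ = Ideal.span {(p : Γ)} ∧
  (∀ a : WittVector p k, ρ (ιΩ (PowerSeries.C a)) = HahnSeries.C (a.coeff 0)) ∧
  ρ (ιΩ PowerSeries.X) = HahnSeries.single (1 : ℤ) (1 : k) ∧
  ∀ x : Γ, ∀ n : ℕ, ∃ (f : PowerSeries (WittVector p k)) (m : ℕ),
    x * ιΩ PowerSeries.X ^ m - ιΩ f ∈ Ideal.span {(p : Γ)} ^ n

/-- `σ` is the standard Frobenius lift on `Γ`: it is compatible via `ιΩ` with the
endomorphism of `Ω` acting as the Witt vector Frobenius on coefficients and sending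
`t` to `t^p`. -/
def IsStandardFrobeniusLift (p : ℕ) [Fact p.Prime] (k : Type) [Field k] (Γ : Type)
    [CommRing Γ] (ιΩ : PowerSeries (WittVector p k) →+* Γ) (σ : Γ →+* Γ) : Prop :=
  ∀ f, σ (ιΩ f) = ιΩ (sigmaOmegaFun p k f)

/-!
Write `x = p^m y` with `p ∤ y`, possible because `Γ` is `p`-adically separated; since `σ p = p`
and `Γ` is a domain, `σ y = λ y` as well. If `λ` is not a unit, then `λ ≡ 0 (mod p)`, so
`σ y ≡ 0 (mod p)`. But `σ` preserves the maximal ideal `(p)` and therefore induces an injective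
endomorphism of the residue field `Γ/(p) = k((t))`, forcing `p ∣ y`.
-/

theorem finiteMultiplicity_of_isHausdorff {R : Type*} [CommRing R] {π x : R}
    [IsHausdorff (Ideal.span {π}) R] (hx : x ≠ 0) : FiniteMultiplicity π x := by
  by_contra h
  simp only [FiniteMultiplicity, not_exists, not_not] at h
  refine hx (IsHausdorff.haus ‹_› x fun n => ?_)
  rw [SModEq.zero, smul_eq_mul, Ideal.mul_top, Ideal.span_singleton_pow,
    Ideal.mem_span_singleton]
  exact (pow_dvd_pow π n.le_succ).trans (h n)

theorem RingHom.ker_comp_eq_ker_of_isMaximal {R S : Type*} [CommRing R] [CommRing S]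
    [IsDomain S] {ρ : R →+* S} (hρ : (RingHom.ker ρ).IsMaximal) {σ : R →+* R}
    (hσ : RingHom.ker ρ ≤ RingHom.ker (ρ.comp σ)) : RingHom.ker (ρ.comp σ) = RingHom.ker ρ :=
  (hρ.eq_of_le (RingHom.ker_isPrime _).ne_top hσ).symm

theorem natCast_dvd_of_map_map_eq_zero {R K : Type*} [CommRing R] [Field K] {ρ : R →+* K}
    (hρ : Function.Surjective ρ) {n : ℕ} (hker : RingHom.ker ρ = Ideal.span {(n : R)})
    (σ : R →+* R) {y : R} (hy : ρ (σ y) = 0) : (n : R) ∣ y := by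
  have hle : RingHom.ker ρ ≤ RingHom.ker (ρ.comp σ) := by
    intro z hz
    obtain ⟨c, rfl⟩ := Ideal.mem_span_singleton.mp (hker ▸ hz)
    have hn : (n : R) ∈ RingHom.ker ρ := hker ▸ Ideal.mem_span_singleton_self (n : R)
    rw [RingHom.mem_ker] at hn
    simp [hn]
  rw [← Ideal.mem_span_singleton, ← hker,
    ← RingHom.ker_comp_eq_ker_of_isMaximal (RingHom.ker_isMaximal_of_surjective ρ hρ) hle]
  exact hy

theorem isUnit_eigenvalue_of_frobenius_eigenvector_in_Gamma_general
    (p : ℕ) [Fact p.Prime] (k : Type) [Field k] [CharP k p]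
    (Γ : Type) [CommRing Γ]
    (ιΩ : PowerSeries (WittVector p k) →+* Γ) (ρ : Γ →+* LaurentSeries k)
    (hΓ : IsGamma p k Γ ιΩ ρ)
    (σ : Γ →+* Γ)
    (x : Γ) (hx : x ≠ 0) (lam : WittVector p k)
    (heq : σ x = ιΩ (PowerSeries.C lam) * x) :
    IsUnit lam := by
  obtain ⟨hdom, -, -, hcomplete, hsurj, hker, hC, -, -⟩ := hΓ
  have : IsHausdorff (Ideal.span {(p : Γ)}) Γ := hcomplete.toIsHausdorff
  obtain ⟨y, hxy, hpy⟩ :=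
    (finiteMultiplicity_of_isHausdorff (π := (p : Γ)) hx).exists_eq_pow_mul_and_not_dvd
  set m := multiplicity (p : Γ) x
  have hpow : (p : Γ) ^ m ≠ 0 := left_ne_zero_of_mul (hxy ▸ hx)
  have hσy : σ y = ιΩ (PowerSeries.C lam) * y := by
    refine mul_left_cancel₀ hpow ?_
    calc (p : Γ) ^ m * σ y = σ x := by rw [hxy, map_mul, map_pow, map_natCast]
      _ = (p : Γ) ^ m * (ιΩ (PowerSeries.C lam) * y) := by rw [heq, hxy]; ring
  by_contra hlam
  have hlam0 : lam.coeff 0 = 0 := by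
    by_contra h
    exact hlam (WittVector.isUnit_of_coeff_zero_ne_zero lam h)
  refine hpy (natCast_dvd_of_map_map_eq_zero hsurj hker σ ?_)
  rw [hσy, map_mul, hC, hlam0, map_zero, zero_mul]

/-- Nonexistence of Frobenius eigenvectors in `Γ` with non-unit
eigenvalue.  If `x ∈ Γ` is nonzero and `λ ∈ O = W(k)` satisfies `σ(x) = λ·x`,
then `λ` is a unit in `O`. -/
theorem isUnit_eigenvalue_of_frobenius_eigenvector_in_Gamma
    (p : ℕ) [Fact p.Prime] (k : Type) [Field k] [IsAlgClosed k] [CharP k p]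
    (Γ : Type) [CommRing Γ]
    (ιΩ : PowerSeries (WittVector p k) →+* Γ) (ρ : Γ →+* LaurentSeries k)
    (hΓ : IsGamma p k Γ ιΩ ρ)
    (σ : Γ →+* Γ) (hσ : IsStandardFrobeniusLift p k Γ ιΩ σ)
    (x : Γ) (hx : x ≠ 0) (lam : WittVector p k)
    (heq : σ x = ιΩ (PowerSeries.C lam) * x) :
    IsUnit lam :=
  isUnit_eigenvalue_of_frobenius_eigenvector_in_Gamma_general p k Γ ιΩ ρ hΓ σ x hx lam heq
end
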